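/- arXiv:1905.12579 — 4 statements merged into one kernel-verified Lean document; each statement's English description precedes it below -/
import Mathlib

section
/- For every nonnegative integer n, as an identity of rational functions in two variables s and t: ((s+1)_n / n!)^3 * (3n+1)! / ((s+t+1)_{3n+2}) = sum over k from 1 to 3n+2 of A_k(t) / (s+t+k), where A_k(t) = (-1)^(k-1) * binomial(3n+1, k-1) * ((-t-k+1)_n / n!)^3. -/
/-!
Both sides are rational functions of `x = s + t` whose numerator `∏ (x - t + 1 + i)^3` has degree
`3n`, less than the number `3n + 2` of poles `x = -1, …, -(3n + 2)`. So the identity is Lagrange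
interpolation of that numerator at these nodes, divided by the nodal polynomial; the nodal weight
at `-k` is `1 / ∏_{j ≠ k} (j - k) = (-1)^(k-1) / ((k-1)! (3n+2-k)!)
= (-1)^(k-1) binom(3n+1, k-1) / (3n+1)!`.
-/

open Finset Polynomial

theorem Lagrange.eval_div_eval_nodal_eq_sum {F ι : Type*} [Field F] [DecidableEq ι]
    {s : Finset ι} {v : ι → F} (hvs : Set.InjOn v s) {p : F[X]} (hp : p.degree < #s) {x : F}
    (hx : ∀ i ∈ s, x ≠ v i) :
    p.eval x / (nodal s v).eval x = ∑ i ∈ s, nodalWeight s v i * p.eval (v i) / (x - v i) := by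
  have h := eval_interpolate_not_at_node (fun i => p.eval (v i)) hx
  rw [← eq_interpolate hvs hp] at h
  rw [h, mul_div_cancel_left₀ _ (eval_nodal_not_at_node hx)]
  exact sum_congr rfl fun i _ => by ring

section NodeProducts

variable {R : Type*} [CommRing R]

theorem prod_range_natCast_sub_self (i : ℕ) :
    ∏ j ∈ range i, ((j : R) - i) = (-1) ^ i * i.factorial := by
  have hflip : ∀ j ∈ range i, (j : R) - i = -1 * ((i : R) - j) := fun _ _ => by ring
  rw [prod_congr rfl hflip, prod_mul_distrib, prod_const, card_range,
    ← descPochhammer_eval_eq_prod_range, descPochhammer_eval_eq_descFactorial,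
    Nat.descFactorial_self]

theorem prod_Ico_natCast_sub_self (i N : ℕ) :
    ∏ j ∈ Ico (i + 1) N, ((j : R) - i) = (N - (i + 1)).factorial := by
  rw [prod_Ico_eq_prod_range, ← prod_range_add_one_eq_factorial, Nat.cast_prod]
  exact prod_congr rfl fun j _ => by push_cast; ring

theorem range_erase_eq_range_union_Ico {i N : ℕ} (hi : i < N) :
    (range N).erase i = range i ∪ Ico (i + 1) N := by
  ext j
  simp only [mem_erase, mem_range, mem_union, mem_Ico]
  omega

theorem prod_range_erase_natCast_sub_self {i N : ℕ} (hi : i < N) :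
    ∏ j ∈ (range N).erase i, ((j : R) - i) = (-1) ^ i * i.factorial * (N - (i + 1)).factorial := by
  rw [range_erase_eq_range_union_Ico hi, prod_union, prod_range_natCast_sub_self,
    prod_Ico_natCast_sub_self]
  exact disjoint_left.2 fun j hj hj' => by simp only [mem_range, mem_Ico] at hj hj'; omega

end NodeProducts

section PartialFractions

variable {K : Type*} [Field K] [CharZero K]

theorem nodalWeight_range_neg_add_one {N i : ℕ} (hi : i < N) :
    Lagrange.nodalWeight (range N) (fun j => -((j : K) + 1)) i
      = (-1) ^ i * (N - 1).choose i / (N - 1).factorial := by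
  have hnodes : ∀ j ∈ (range N).erase i, -((i : K) + 1) - -((j : K) + 1) = j - i :=
    fun _ _ => by ring
  have hfac : ((N - 1).factorial : K) ≠ 0 := Nat.cast_ne_zero.2 (Nat.factorial_ne_zero _)
  rw [Lagrange.nodalWeight, prod_inv_distrib, prod_congr rfl hnodes,
    prod_range_erase_natCast_sub_self hi, Nat.cast_choose K (by omega),
    show N - 1 - i = N - (i + 1) by omega]
  field_simp
  rw [pow_right_comm, neg_one_sq, one_pow]

theorem eval_div_prod_range_add_eq_sum {N : ℕ} {p : K[X]} (hp : p.degree < N) {x : K}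
    (hx : ∀ i < N, x + (i + 1) ≠ 0) :
    p.eval x / ∏ i ∈ range N, (x + (i + 1))
      = ∑ i ∈ range N, (-1) ^ i * (N - 1).choose i / (N - 1).factorial * p.eval (-((i : K) + 1))
          / (x + (i + 1)) := by
  have hvs : Set.InjOn (fun j : ℕ => -((j : K) + 1)) (range N) := fun a _ b _ hab => by
    simpa using hab
  have hx' : ∀ i ∈ range N, x ≠ -((i : K) + 1) := fun i hi h =>
    hx i (mem_range.1 hi) (by rw [h]; ring)
  have h := Lagrange.eval_div_eval_nodal_eq_sum hvs (by rwa [card_range]) hx' (p := p)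
  simp only [Lagrange.eval_nodal, sub_neg_eq_add] at h
  rw [h]
  exact sum_congr rfl fun i hi => by rw [nodalWeight_range_neg_add_one (mem_range.1 hi)]

theorem prod_pow_three_div_prod_eq_sum (n : ℕ) {s t : K}
    (hst : ∀ i < 3 * n + 2, s + t + (i + 1) ≠ 0) :
    (∏ i ∈ range n, (s + 1 + i)) ^ 3 / ∏ i ∈ range (3 * n + 2), (s + t + 1 + i)
      = ∑ i ∈ range (3 * n + 2), (-1) ^ i * (3 * n + 1).choose i / (3 * n + 1).factorial
          * (∏ j ∈ range n, (-t - (1 + i) + 1 + j)) ^ 3 / (s + t + (1 + i)) := by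
  set q : K[X] := ∏ j ∈ range n, (X - C (t - 1 - j))
  have hdeg : (q ^ 3).degree < ↑(3 * n + 2) := by
    refine degree_le_natDegree.trans_lt ?_
    rw [natDegree_pow, natDegree_finsetProd_X_sub_C_eq_card, card_range]
    exact_mod_cast (by omega : 3 * n < 3 * n + 2)
  have h := eval_div_prod_range_add_eq_sum hdeg hst
  simp only [q, eval_pow, eval_prod, eval_sub, eval_X, eval_C,
    show 3 * n + 2 - 1 = 3 * n + 1 by omega] at h
  convert h using 2 with i
  · congr 1
    exact prod_congr rfl fun _ _ => by ring
  · exact prod_congr rfl fun _ _ => by ring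
  · rw [add_comm 1 (i : K)]
    congr 3
    exact prod_congr rfl fun _ _ => by ring

end PartialFractions

theorem stmt_1 (n : ℕ) (s t : ℚ)
    (h : ∀ k ∈ Finset.Icc 1 (3 * n + 2), s + t + (k : ℚ) ≠ 0) :
    ((∏ i ∈ Finset.range n, (s + 1 + (i : ℚ))) / (n.factorial : ℚ)) ^ 3 *
        ((3 * n + 1).factorial : ℚ) / (∏ i ∈ Finset.range (3 * n + 2), (s + t + 1 + (i : ℚ)))
      = ∑ k ∈ Finset.Icc 1 (3 * n + 2),
          ((-1 : ℚ) ^ (k - 1) * ((3 * n + 1).choose (k - 1) : ℚ) *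
            ((∏ i ∈ Finset.range n, (-t - (k : ℚ) + 1 + (i : ℚ))) / (n.factorial : ℚ)) ^ 3)
            / (s + t + (k : ℚ)) := by
  have hst : ∀ i < 3 * n + 2, s + t + ((i : ℚ) + 1) ≠ 0 := fun i hi => by
    exact_mod_cast h (i + 1) (mem_Icc.2 ⟨by omega, by omega⟩)
  rw [← Ico_add_one_right_eq_Icc, sum_Ico_eq_sum_range]
  simp only [Nat.add_sub_cancel, Nat.add_sub_cancel_left]
  push_cast
  calc _ = (3 * n + 1).factorial / (n.factorial : ℚ) ^ 3 * ((∏ i ∈ range n, (s + 1 + (i : ℚ))) ^ 3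
        / ∏ i ∈ range (3 * n + 2), (s + t + 1 + (i : ℚ))) := by ring
    _ = _ := by
      rw [prod_pow_three_div_prod_eq_sum n hst, mul_sum]
      refine sum_congr rfl fun k _ => ?_
      field_simp
end

section
/- Let n be a positive integer, let d_n denote the least common multiple of 1, 2, ..., n, and let m be any integer. Define the polynomial R(t) = (t+m)(t+m+1)...(t+m+n-1) / n!. Then for every integer j, the number d_n * R'(j) is an integer, where R' is the derivative of R. -/
/-!
Differentiating the product gives `R'(j) = ∑ₖ ∏_{i ≠ k} (j + m + i) / n!`. Removing the factor
`i = k` splits the product into runs of `k` and `n - 1 - k` consecutive integers, divisible by `k!`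
and `(n - 1 - k)!`, so the `k`-th term is an integer multiple of `k! (n - 1 - k)! / n!`, the
reciprocal of `n * choose (n - 1) k`. That number divides `d_n`: writing
`B(a, b) = (a + b + 1) * choose (a + b) a`, the Beta-function recursion
`1 / B(a, b + 1) = 1 / B(a, b) - 1 / B(a + 1, b)` and `B(a, 0) = a + 1` give the claim by
induction on `b`.
-/

open Polynomial

theorem dvd_of_mul_sub_eq_mul {R : Type*} [CommRing R] [IsDomain R] {x y z d : R}
    (hxy : x ≠ y) (h : z * (y - x) = x * y) (hx : x ∣ d) (hy : y ∣ d) : z ∣ d := by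
  obtain ⟨u, rfl⟩ := hx
  obtain ⟨v, hv⟩ := hy
  refine ⟨u - v, mul_right_cancel₀ (sub_ne_zero.mpr hxy.symm) ?_⟩
  linear_combination -(u - v) * h - x * hv

theorem Polynomial.ascPochhammer_eval_eq_prod_range {R : Type*} [CommSemiring R] (k : ℕ) (r : R) :
    (ascPochhammer R k).eval r = ∏ i ∈ Finset.range k, (r + i) := by
  induction k with
  | zero => simp
  | succ k ih => simp [ascPochhammer_succ_right, ih, Finset.prod_range_succ]

theorem Polynomial.eval_derivative_prod_X_add_C {R ι : Type*} [CommRing R] [DecidableEq ι]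
    (s : Finset ι) (c : ι → R) (x : R) :
    (derivative (∏ i ∈ s, (X + C (c i)))).eval x = ∑ k ∈ s, ∏ i ∈ s.erase k, (x + c i) := by
  simp [derivative_prod_finset, eval_finsetSum, eval_prod]

theorem Finset.prod_range_add_one_add_erase {M : Type*} [CommMonoid M] (f : ℕ → M) (k l : ℕ) :
    ∏ i ∈ (range (k + 1 + l)).erase k, f i =
      (∏ i ∈ range k, f i) * ∏ i ∈ range l, f (k + 1 + i) := by
  induction l with
  | zero => simp [range_add_one]
  | succ l ih =>
    rw [← add_assoc, range_add_one, erase_insert_of_ne (by omega),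
      prod_insert (fun h => by simp at h), ih, prod_range_succ]
    ac_rfl

theorem Int.prod_range_add_eq_factorial_mul_multichoose (a : ℤ) (k : ℕ) :
    ∏ i ∈ Finset.range k, (a + i) = k.factorial * Ring.multichoose a k := by
  rw [← ascPochhammer_eval_eq_prod_range, eval_eq_smeval, ascPochhammer_smeval_cast ℤ,
    ← Ring.factorial_nsmul_multichoose_eq_ascPochhammer, nsmul_eq_mul]

namespace Nat

theorem lcmUpto_dvd_lcmUpto {m n : ℕ} (h : m ≤ n) : lcmUpto m ∣ lcmUpto n :=
  Finset.lcm_mono (Finset.Icc_subset_Icc_right h)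

theorem add_one_dvd_lcmUpto {a n : ℕ} (h : a + 1 ≤ n) : a + 1 ∣ lcmUpto n :=
  Finset.dvd_lcm (s := Finset.Icc 1 n) (f := id) (Finset.mem_Icc.mpr ⟨by omega, h⟩)

theorem add_add_one_mul_choose_dvd_lcmUpto (a b : ℕ) :
    (a + b + 1) * (a + b).choose a ∣ lcmUpto (a + b + 1) := by
  induction b generalizing a with
  | zero => simpa using add_one_dvd_lcmUpto (le_refl (a + 1))
  | succ b ih =>
    have hX := (ih a).trans (lcmUpto_dvd_lcmUpto (le_succ _))
    have hY := ih (a + 1)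
    rw [show a + 1 + b = a + (b + 1) by ring] at hY
    have hy := congrArg (Nat.cast : ℕ → ℤ) (add_one_mul_choose_eq (a + b) a)
    have hz := congrArg (Nat.cast : ℕ → ℤ) (choose_mul_succ_eq (a + b) a)
    rw [show a + b + 1 - a = b + 1 by omega] at hz
    have hy_pos : 0 < ((a + b + 1).choose (a + 1) : ℤ) := by exact_mod_cast choose_pos (by omega)
    rw [← Int.natCast_dvd_natCast] at hX hY ⊢
    push_cast [show a + (b + 1) = a + b + 1 by ring] at hy hz hX hY ⊢
    refine dvd_of_mul_sub_eq_mul ?_ ?_ hX hY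
    · intro h
      linarith [mul_pos hy_pos (by positivity : (0 : ℤ) < b + 1)]
    · linear_combination -(↑a + ↑b + 2 : ℤ) *
        (((a + b + 1).choose a : ℤ) * hy + ((a + b + 1).choose (a + 1) : ℤ) * hz)

theorem factorial_dvd_lcmUpto_mul_prod_range_erase (a : ℤ) (k l : ℕ) :
    ((k + 1 + l).factorial : ℤ) ∣
      lcmUpto (k + 1 + l) * ∏ i ∈ (Finset.range (k + 1 + l)).erase k, (a + i) := by
  obtain ⟨w, hw⟩ := add_add_one_mul_choose_dvd_lcmUpto k l
  have hfact := add_choose_mul_factorial_mul_factorial l k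
  rw [Finset.prod_range_add_one_add_erase, Int.prod_range_add_eq_factorial_mul_multichoose]
  simp_rw [Nat.cast_add, Nat.cast_one, ← add_assoc a]
  rw [Int.prod_range_add_eq_factorial_mul_multichoose, show k + 1 + l = k + l + 1 by ring, hw,
    factorial_succ, add_comm k l, ← hfact]
  exact Dvd.intro (w * Ring.multichoose a k * Ring.multichoose (a + k + 1) l) (by push_cast; ring)

end Nat

theorem stmt_3_general (n : ℕ) (m : ℤ)
    (R : Polynomial ℚ)
    (hR : R = (∏ i ∈ Finset.range n, (X + C ((m : ℚ) + (i : ℚ)))) * C ((n.factorial : ℚ))⁻¹)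
    (j : ℤ) :
    ∃ z : ℤ, (((Finset.Icc 1 n).lcm id : ℕ) : ℚ) * (Polynomial.derivative R).eval (j : ℚ) = (z : ℚ) := by
  change ∃ z : ℤ, (Nat.lcmUpto n : ℚ) * _ = _
  have hterm : ∀ k ∈ Finset.range n, (Nat.lcmUpto n : ℚ) *
      ((∏ i ∈ (Finset.range n).erase k, ((j : ℚ) + (m + i))) * (n.factorial : ℚ)⁻¹) ∈
        (⊥ : Subring ℚ) := by
    intro k hk
    obtain ⟨l, rfl⟩ : ∃ l, n = k + 1 + l := ⟨n - k - 1, by simp at hk; omega⟩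
    obtain ⟨w, hw⟩ := Nat.factorial_dvd_lcmUpto_mul_prod_range_erase (j + m) k l
    refine Subring.mem_bot.mpr ⟨w, ?_⟩
    have hw' := congrArg (Int.cast : ℤ → ℚ) hw
    push_cast at hw'
    simp only [← add_assoc]
    field_simp
    linear_combination -hw'
  subst hR
  rw [derivative_mul, derivative_C, mul_zero, add_zero, eval_mul, eval_C,
    eval_derivative_prod_X_add_C, Finset.sum_mul, Finset.mul_sum]
  obtain ⟨z, hz⟩ := Subring.mem_bot.mp (Subring.sum_mem _ hterm)
  exact ⟨z, hz.symm⟩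

theorem stmt_3 (n : ℕ) (hn : 0 < n) (m : ℤ)
    (R : Polynomial ℚ)
    (hR : R = (∏ i ∈ Finset.range n, (X + C ((m : ℚ) + (i : ℚ)))) * C ((n.factorial : ℚ))⁻¹)
    (j : ℤ) :
    ∃ z : ℤ, (((Finset.Icc 1 n).lcm id : ℕ) : ℚ) * (Polynomial.derivative R).eval (j : ℚ) = (z : ℚ) :=
  stmt_3_general n m R hR j
end

section
/- Let n be a positive integer and let p be a prime with p^2 > 3n and 2/3 <= frac(n/p) < 1, where frac denotes the fractional part. Then for all nonnegative integers a and b with a >= n, b >= n and a + b + 1 <= 3n + 1, the prime p divides the product binomial(3n+1, a+b+1) * binomial(a, n) * binomial(b, n). -/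
/-!
Write `r = n % p`, so the hypothesis says `3r ≥ 2p`. By Lucas' theorem `p ∣ m.choose k` as soon
as the last base-`p` digit of `k` exceeds that of `m`. If `a % p < r` or `b % p < r` this kills
`a.choose n` or `b.choose n`. Otherwise `a % p + b % p + 1 ≥ 2r + 1 > p`, so
`(a + b + 1) % p ≥ 2r + 1 - p`, which exceeds `(3n + 1) % p = 3r + 1 - 2p` because `r < p`;
then `p` divides `(3n + 1).choose (a + b + 1)`.
-/

theorem Nat.Prime.dvd_choose_of_mod_lt {p m k : ℕ} (hp : p.Prime) (h : m % p < k % p) :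
    p ∣ m.choose k := by
  have := Fact.mk hp
  have lucas := Choose.choose_modEq_choose_mod_mul_choose_div_nat (n := m) (k := k) (p := p)
  rw [Nat.choose_eq_zero_of_lt h, zero_mul] at lucas
  exact Nat.modEq_zero_iff_dvd.mp lucas

theorem two_mul_le_three_mul_mod_of_two_div_three_le_fract {k : Type*} [Field k] [LinearOrder k]
    [IsStrictOrderedRing k] [FloorRing k] {n p : ℕ} (hp : 0 < p)
    (h : (2 : k) / 3 ≤ Int.fract ((n : k) / p)) : 2 * p ≤ 3 * (n % p) := by
  rw [Int.fract_div_natCast_eq_div_natCast_mod,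
    div_le_div_iff₀ (by norm_num) (by exact_mod_cast hp)] at h
  exact_mod_cast (by linarith : (2 : k) * p ≤ 3 * (n % p : ℕ))

theorem three_mul_add_one_mod_lt_add_add_one_mod {p n a b : ℕ} (hp : 0 < p)
    (hr : 2 * p ≤ 3 * (n % p)) (ha : n % p ≤ a % p) (hb : n % p ≤ b % p) :
    (3 * n + 1) % p < (a + b + 1) % p := by
  have hn := Nat.mod_lt n hp
  have hap := Nat.mod_lt a hp
  have hbp := Nat.mod_lt b hp
  have h3n : (3 * n + 1) % p = 3 * (n % p) + 1 - 2 * p := by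
    have := Nat.div_add_mod n p
    rw [show 3 * n + 1 = (3 * (n % p) + 1 - 2 * p) + p * (3 * (n / p) + 2) by grind,
      Nat.add_mul_mod_self_left, Nat.mod_eq_of_lt (by omega)]
  have hab : (a + b + 1) % p = a % p + b % p + 1 - p := by
    have := Nat.div_add_mod a p
    have := Nat.div_add_mod b p
    rw [show a + b + 1 = (a % p + b % p + 1 - p) + p * (a / p + b / p + 1) by grind,
      Nat.add_mul_mod_self_left, Nat.mod_eq_of_lt (by omega)]
  omega

theorem stmt_5_general (n : ℕ) (p : ℕ) (hp : p.Prime)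
    (hfrac1 : (2 : ℚ) / 3 ≤ Int.fract ((n : ℚ) / (p : ℚ))) :
    ∀ a b : ℕ, n ≤ a → n ≤ b → a + b + 1 ≤ 3 * n + 1 →
      p ∣ (3 * n + 1).choose (a + b + 1) * a.choose n * b.choose n := by
  intro a b _ _ _
  have hr := two_mul_le_three_mul_mod_of_two_div_three_le_fract hp.pos hfrac1
  rcases lt_or_ge (a % p) (n % p) with ha | ha
  · exact ((hp.dvd_choose_of_mod_lt ha).mul_left _).mul_right _
  rcases lt_or_ge (b % p) (n % p) with hb | hb
  · exact (hp.dvd_choose_of_mod_lt hb).mul_left _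
  exact ((hp.dvd_choose_of_mod_lt
    (three_mul_add_one_mod_lt_add_add_one_mod hp.pos hr ha hb)).mul_right _).mul_right _

theorem stmt_5 (n : ℕ) (hn : 0 < n) (p : ℕ) (hp : p.Prime)
    (hp2 : 3 * n < p ^ 2)
    (hfrac1 : (2 : ℚ) / 3 ≤ Int.fract ((n : ℚ) / (p : ℚ)))
    (hfrac2 : Int.fract ((n : ℚ) / (p : ℚ)) < 1) :
    ∀ a b : ℕ, n ≤ a → n ≤ b → a + b + 1 ≤ 3 * n + 1 →
      p ∣ (3 * n + 1).choose (a + b + 1) * a.choose n * b.choose n :=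
  stmt_5_general n p hp hfrac1
end

section
/- For every positive integer n, as an identity of rational functions in t: the sum over k from 1 to 3n+2 of A_k(t) * (sum over l from 1 to k-1 of 1/(t+l)^2) equals the sum over k from 1 to 3n+2 of A_k(t) * (sum over l from 1 to k-1 of 1/(t+l-n)^2), where A_k(t) = (-1)^(k-1) * binomial(3n+1, k-1) * ((-t-k+1)_n / n!)^3. -/
/-! With `Sₖ`, `S'ₖ` the two inner sums, the difference of the sides is `∑ₖ Aₖ (Sₖ - S'ₖ)`, and
an index shift gives
`Sₖ - S'ₖ = ∑_{i<n} 1/(k + t + i - n)² - c` with `c` independent of `k`. Up to sign and `n!³`,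
the cubed Pochhammer factor of `Aₖ` is `P(k)³` with `P(x) = ∏_{i<n} (x + t + i - n)`, which clears
these denominators, so `Aₖ (Sₖ - S'ₖ) = (-1)^(k-1) binom(3n+1, k-1) R(k)` for a polynomial `R` of
degree at most `3n`. An alternating binomial sum of length `3n+2` is a `(3n+1)`-st forward
difference, which annihilates `R`. -/

open Finset Polynomial

theorem Finset.sum_Icc_one_eq_sum_range {M : Type*} [AddCommMonoid M] (f : ℕ → M) (m : ℕ) :
    ∑ l ∈ Icc 1 m, f l = ∑ l ∈ range m, f (l + 1) := by
  rw [range_eq_Ico, sum_Ico_add', Ico_add_one_right_eq_Icc]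

theorem Finset.sum_range_add_sub_sum_range_comm {M : Type*} [AddCommGroup M] (f : ℕ → M)
    (m n : ℕ) :
    ∑ l ∈ range m, f (n + l) - ∑ l ∈ range m, f l
      = ∑ l ∈ range n, f (m + l) - ∑ l ∈ range n, f l := by
  rw [sub_eq_sub_iff_add_eq_add, add_comm, ← sum_range_add, add_comm (∑ l ∈ range n, _),
    ← sum_range_add, add_comm]

theorem Finset.prod_pow_div_pow_eq {K ι : Type*} [Field K] [DecidableEq ι] {s : Finset ι}
    {f : ι → K} {i : ι} (hi : i ∈ s) {d e : ℕ} (hde : d < e) :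
    (∏ j ∈ s, f j) ^ e / f i ^ d = f i ^ (e - d) * (∏ j ∈ s.erase i, f j) ^ e := by
  -- `d < e` makes this hold also when `f i = 0`, where `/` returns `0`
  rw [← mul_prod_erase s f hi, mul_pow, pow_sub_of_lt _ hde]
  ring

theorem Polynomial.natDegree_prod_X_add_C_le {R ι : Type*} [CommRing R] (s : Finset ι)
    (a : ι → R) : (∏ i ∈ s, (X + C (a i))).natDegree ≤ #s :=
  (natDegree_prod_le _ _).trans <|
    (sum_le_sum fun _ _ => natDegree_add_C.trans_le natDegree_X_le).trans (by simp)

theorem Polynomial.exists_natDegree_le_eval_eq_prod_pow_mul_sum_one_div_pow {K ι : Type*}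
    [Field K] (s : Finset ι) (a : ι → K) {d e : ℕ} (hde : d < e) :
    ∃ Q : K[X], Q.natDegree ≤ e * #s ∧
      ∀ x, Q.eval x = (∏ i ∈ s, (x + a i)) ^ e * ∑ i ∈ s, 1 / (x + a i) ^ d := by
  classical
  refine ⟨∑ i ∈ s, (X + C (a i)) ^ (e - d) * (∏ j ∈ s.erase i, (X + C (a j))) ^ e,
    natDegree_sum_le_of_forall_le _ _ fun i hi => ?_, fun x => ?_⟩
  · have hlin := natDegree_pow_le_of_le (e - d)
      ((natDegree_add_C (a := a i)).trans_le natDegree_X_le)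
    have hprod := natDegree_pow_le_of_le e (natDegree_prod_X_add_C_le (s.erase i) a)
    have hcard : e * #(s.erase i) + e = e * #s := by rw [← card_erase_add_one hi, mul_add_one]
    exact natDegree_mul_le.trans (by omega)
  · simp only [eval_finsetSum, eval_mul, eval_pow, eval_prod, eval_add, eval_X, eval_C, mul_sum,
      mul_one_div]
    exact sum_congr rfl fun i hi => (prod_pow_div_pow_eq (f := fun j => x + a j) hi hde).symm

theorem Polynomial.sum_range_neg_one_pow_mul_choose_mul_eval_add_eq_zero {R : Type*} [CommRing R]
    {P : R[X]} {m : ℕ} (hP : P.natDegree < m) (x : R) :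
    ∑ j ∈ range (m + 1), (-1) ^ j * m.choose j * P.eval (x + j) = 0 := by
  have h := fwdDiff_iter_eq_sum_shift 1 P.eval m x
  rw [fwdDiff_iter_eq_zero_of_degree_lt hP, Pi.zero_apply] at h
  rw [← mul_zero ((-1 : R) ^ m), h, mul_sum]
  refine sum_congr rfl fun j hj => ?_
  obtain ⟨i, rfl⟩ := Nat.exists_eq_add_of_le (Nat.lt_succ_iff.mp (mem_range.mp hj))
  simp only [Nat.add_sub_cancel_left, zsmul_eq_mul, nsmul_one]
  push_cast
  ring_nf
  rw [pow_mul', neg_one_sq, one_pow, mul_one]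

theorem prod_range_neg_sub_add_one_add_eq {K : Type*} [CommRing K] (n : ℕ) (t x : K) :
    ∏ i ∈ range n, (-t - x + 1 + i) = (-1) ^ n * ∏ i ∈ range n, (x + (t + i - n)) := by
  calc ∏ i ∈ range n, (-t - x + 1 + i)
      = ∏ i ∈ range n, -(x + (t + ((n - 1 - i : ℕ) : K) - n)) := by
        refine prod_congr rfl fun i hi => ?_
        have hi : i < n := mem_range.mp hi
        rw [Nat.sub_sub, Nat.cast_sub (by omega)]
        push_cast
        ring
    _ = (-1) ^ n * ∏ i ∈ range n, (x + (t + i - n)) := by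
        rw [prod_neg, card_range, prod_range_reflect (fun i : ℕ => x + (t + i - n))]

theorem sum_Icc_one_div_sq_sub_sum_Icc_one_div_sq {K : Type*} [Field K] (n j : ℕ) (t : K) :
    ∑ l ∈ Icc 1 j, 1 / (t + l) ^ 2 - ∑ l ∈ Icc 1 j, 1 / (t + l - n) ^ 2
      = ∑ i ∈ range n, 1 / ((j + 1 : ℕ) + (t + i - n)) ^ 2
        - ∑ i ∈ range n, 1 / (t + (i + 1 : ℕ) - n) ^ 2 := by
  rw [sum_Icc_one_eq_sum_range, sum_Icc_one_eq_sum_range]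
  convert sum_range_add_sub_sum_range_comm (fun l : ℕ => 1 / (t + (l + 1 : ℕ) - n) ^ 2) j n
    using 4 <;> push_cast <;> ring

theorem exists_natDegree_le_eval_eq_summand_sub {K : Type*} [Field K] (n : ℕ) (t : K) :
    ∃ R : K[X], R.natDegree ≤ 3 * n ∧ ∀ j : ℕ,
      ((∏ i ∈ range n, (-t - ((j + 1 : ℕ) : K) + 1 + i)) / n.factorial) ^ 3 *
          (∑ l ∈ Icc 1 j, 1 / (t + l) ^ 2 - ∑ l ∈ Icc 1 j, 1 / (t + l - n) ^ 2)
        = R.eval (1 + (j : K)) := by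
  obtain ⟨Q, hQ, hQeval⟩ := exists_natDegree_le_eval_eq_prod_pow_mul_sum_one_div_pow
    (range n) (fun i : ℕ => t + i - n) (by norm_num : 2 < 3)
  set P : K[X] := ∏ i ∈ range n, (X + C (t + i - n))
  refine ⟨C (((-1 : K) ^ n / n.factorial) ^ 3) *
    (Q - C (∑ i ∈ range n, 1 / (t + (i + 1 : ℕ) - n) ^ 2) * P ^ 3), ?_, fun j => ?_⟩
  · have hP : (P ^ 3).natDegree ≤ 3 * n := natDegree_pow_le_of_le 3
      ((natDegree_prod_X_add_C_le _ _).trans (card_range n).le)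
    rw [card_range] at hQ
    refine natDegree_C_mul_le _ _ |>.trans <| (natDegree_sub_le _ _).trans <| max_le hQ ?_
    exact natDegree_C_mul_le _ _ |>.trans hP
  · rw [sum_Icc_one_div_sq_sub_sum_Icc_one_div_sq, prod_range_neg_sub_add_one_add_eq,
      add_comm (1 : K), ← Nat.cast_add_one]
    simp only [eval_mul, eval_C, eval_sub, eval_pow, P, eval_prod, eval_add, eval_X, hQeval]
    ring

theorem stmt_16_general (n : ℕ) (t : ℚ) :
    ∑ k ∈ Finset.Icc 1 (3 * n + 2),
        ((-1 : ℚ) ^ (k - 1) * ((3 * n + 1).choose (k - 1) : ℚ) *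
            ((∏ i ∈ Finset.range n, (-t - (k : ℚ) + 1 + (i : ℚ))) / (n.factorial : ℚ)) ^ 3) *
          (∑ l ∈ Finset.Icc 1 (k - 1), 1 / (t + (l : ℚ)) ^ 2)
      = ∑ k ∈ Finset.Icc 1 (3 * n + 2),
          ((-1 : ℚ) ^ (k - 1) * ((3 * n + 1).choose (k - 1) : ℚ) *
              ((∏ i ∈ Finset.range n, (-t - (k : ℚ) + 1 + (i : ℚ))) / (n.factorial : ℚ)) ^ 3) *
            (∑ l ∈ Finset.Icc 1 (k - 1), 1 / (t + (l : ℚ) - (n : ℚ)) ^ 2) := by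
  obtain ⟨R, hR, hRj⟩ := exists_natDegree_le_eval_eq_summand_sub n t
  rw [← sub_eq_zero, ← sum_sub_distrib, sum_Icc_one_eq_sum_range,
    ← sum_range_neg_one_pow_mul_choose_mul_eval_add_eq_zero (hR.trans_lt (Nat.lt_add_one _)) 1]
  refine sum_congr rfl fun j _ => ?_
  rw [← mul_sub, Nat.add_sub_cancel, mul_assoc, hRj]

theorem stmt_16 (n : ℕ) (hn : 0 < n) (t : ℚ)
    (ht : ∀ l : ℤ, 1 - (n : ℤ) ≤ l → l ≤ 3 * n + 1 → t + (l : ℚ) ≠ 0) :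
    ∑ k ∈ Finset.Icc 1 (3 * n + 2),
        ((-1 : ℚ) ^ (k - 1) * ((3 * n + 1).choose (k - 1) : ℚ) *
            ((∏ i ∈ Finset.range n, (-t - (k : ℚ) + 1 + (i : ℚ))) / (n.factorial : ℚ)) ^ 3) *
          (∑ l ∈ Finset.Icc 1 (k - 1), 1 / (t + (l : ℚ)) ^ 2)
      = ∑ k ∈ Finset.Icc 1 (3 * n + 2),
          ((-1 : ℚ) ^ (k - 1) * ((3 * n + 1).choose (k - 1) : ℚ) *
              ((∏ i ∈ Finset.range n, (-t - (k : ℚ) + 1 + (i : ℚ))) / (n.factorial : ℚ)) ^ 3) *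
            (∑ l ∈ Finset.Icc 1 (k - 1), 1 / (t + (l : ℚ) - (n : ℚ)) ^ 2) :=
  stmt_16_general n t
end
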